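/- arXiv:0910.0386 — 4 statements merged into one kernel-verified Lean document; each statement's English description precedes it below -/
import Mathlib

section
/- Let F_n be the free group on x_1, ..., x_n (n ≥ 2, d ≥ 2), and let W = ker ι where ι : F_n → Z/dZ sends x_1 to a generator and x_i (i ≠ 1) to 1. The restriction map from the IA-automorphism group of F_n (automorphisms acting trivially on the abelianization) to Aut(W) is injective. Equivalently: if σ is an IA-automorphism of F_n that fixes every element of W, then σ is the identity. -/
set_option linter.unusedSectionVars false
set_option linter.unreachableTactic false
set_option linter.unusedTactic false

open FreeGroup

variable {α : Type*} [DecidableEq α]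

private lemma reduce_cons_of_ne' {x : α × Bool} {L : List (α × Bool)}
    (hL : FreeGroup.reduce L = L)
    (hhead : ∀ p ∈ L.head?, ¬ (x.1 = p.1 ∧ x.2 = !p.2)) :
    FreeGroup.reduce (x :: L) = x :: L := by
  rw [FreeGroup.reduce.cons, hL]
  cases L with
  | nil => rfl
  | cons hd tl =>
    have h := hhead hd (by simp)
    simp only []
    rw [if_neg h]

private lemma reduce_tail' {x : α × Bool} {L : List (α × Bool)}
    (h : FreeGroup.reduce (x :: L) = x :: L) :
    FreeGroup.reduce L = L := by
  have h1 : FreeGroup.Red (x :: L) (x :: FreeGroup.reduce L) :=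
    FreeGroup.Red.cons_cons FreeGroup.reduce.red
  have h2 : FreeGroup.reduce (x :: L) = x :: FreeGroup.reduce L :=
    FreeGroup.reduce.min (by rw [h]; exact h1)
  rw [h] at h2
  exact (List.cons.injEq _ _ _ _ ▸ h2).2.symm

private lemma peel' {c : FreeGroup α} {i : α} {b : Bool} {t : List (α × Bool)}
    (h : c.toWord = (i, b) :: t) :
    c = (if b then FreeGroup.of i else (FreeGroup.of i)⁻¹) * FreeGroup.mk t ∧
      (FreeGroup.mk t).toWord = t := by
  have hred : FreeGroup.reduce ((i, b) :: t) = (i, b) :: t := by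
    rw [← h]; exact reduce_toWord c
  have ht : FreeGroup.reduce t = t := reduce_tail' hred
  refine ⟨?_, by rw [FreeGroup.toWord_mk, ht]⟩
  have hc : c = FreeGroup.mk ((i, b) :: t) := by rw [← h, FreeGroup.mk_toWord]
  rw [hc, show ((i, b) :: t) = [(i, b)] ++ t from rfl, ← FreeGroup.mul_mk]
  congr 1
  cases b
  · rw [if_neg (by simp)]
    rw [show FreeGroup.of i = FreeGroup.mk [(i, true)] from rfl, FreeGroup.inv_mk]
    simp [FreeGroup.invRev]
  · rfl

private lemma invRev_cons' (x : α × Bool) (L : List (α × Bool)) :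
    FreeGroup.invRev (x :: L) = FreeGroup.invRev L ++ [(x.1, !x.2)] := by
  simp [FreeGroup.invRev]

private lemma all_eq_of_cons_eq_append {β : Type*} {a : β} :
    ∀ {L : List β}, a :: L = L ++ [a] → ∀ x ∈ L, x = a := by
  intro L
  induction L with
  | nil => simp
  | cons b t ih =>
    intro h x hx
    rw [List.cons_append] at h
    obtain ⟨h1, h2⟩ := List.cons.inj h
    subst h1
    rcases List.mem_cons.mp hx with rfl | hx'
    · rfl
    · exact ih h2 x hx'

private lemma commute_of_eq_zpow' :
    ∀ (m : ℕ) (c : FreeGroup α) (i : α), c.toWord.length ≤ m →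
      Commute (FreeGroup.of i) c → ∃ k : ℤ, c = FreeGroup.of i ^ k := by
  intro m
  induction m with
  | zero =>
    intro c i hlen _
    refine ⟨0, ?_⟩
    rw [zpow_zero]
    exact FreeGroup.toWord_eq_nil_iff.mp (List.eq_nil_of_length_eq_zero (Nat.le_zero.mp hlen))
  | succ m ih =>
    intro c i hlen hcomm
    cases h : c.toWord with
    | nil => exact ⟨0, by rw [zpow_zero]; exact FreeGroup.toWord_eq_nil_iff.mp h⟩
    | cons p t =>
      obtain ⟨j, b⟩ := p
      by_cases hji : j = i
      · subst hji
        obtain ⟨hc, ht⟩ := peel' h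
        set e : FreeGroup α := if b then FreeGroup.of j else (FreeGroup.of j)⁻¹ with he
        have hce : Commute (FreeGroup.of j) e := by
          cases b <;> simp [he] <;> exact (Commute.refl _).inv_right
        have hmkt : FreeGroup.mk t = e⁻¹ * c := by rw [hc]; group
        have hcomm' : Commute (FreeGroup.of j) (FreeGroup.mk t) := by
          rw [hmkt]; exact hce.inv_right.mul_right hcomm
        have hlen' : (FreeGroup.mk t).toWord.length ≤ m := by
          rw [ht]
          have : c.toWord.length ≤ m + 1 := hlen
          rw [h] at this
          simpa using this
        obtain ⟨k, hk⟩ := ih (FreeGroup.mk t) j hlen' hcomm'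
        refine ⟨(if b then (1 : ℤ) else -1) + k, ?_⟩
        rw [hc, hk, zpow_add]
        cases b <;> simp [he]
      · cases h2 : (c⁻¹).toWord with
        | nil =>
          refine ⟨0, by rw [zpow_zero]; have := FreeGroup.toWord_eq_nil_iff.mp h2; simpa using this⟩
        | cons q t2 =>
          obtain ⟨j2, b2⟩ := q
          by_cases hj2 : j2 = i
          · subst hj2
            obtain ⟨hc, ht⟩ := peel' h2
            set e : FreeGroup α := if b2 then FreeGroup.of j2 else (FreeGroup.of j2)⁻¹ with he
            have hce : Commute (FreeGroup.of j2) e := by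
              cases b2 <;> simp [he] <;> exact (Commute.refl _).inv_right
            have hmkt : FreeGroup.mk t2 = e⁻¹ * c⁻¹ := by rw [hc]; group
            have hcomm' : Commute (FreeGroup.of j2) (FreeGroup.mk t2) := by
              rw [hmkt]; exact hce.inv_right.mul_right hcomm.inv_right
            have hlen' : (FreeGroup.mk t2).toWord.length ≤ m := by
              rw [ht]
              have h3 : (c⁻¹).toWord.length ≤ m + 1 := by
                rw [FreeGroup.toWord_inv, FreeGroup.invRev_length]; exact hlen
              rw [h2] at h3
              simpa using h3
            obtain ⟨k, hk⟩ := ih (FreeGroup.mk t2) j2 hlen' hcomm'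
            refine ⟨-((if b2 then (1 : ℤ) else -1) + k), ?_⟩
            have : c⁻¹ = FreeGroup.of j2 ^ ((if b2 then (1 : ℤ) else -1) + k) := by
              rw [hc, hk, zpow_add]
              cases b2 <;> simp [he]
            rw [zpow_neg, ← this, inv_inv]
          · exfalso
            have e1 : (FreeGroup.of i * c).toWord = (i, true) :: c.toWord := by
              have hmul : FreeGroup.of i * c = FreeGroup.mk ((i, true) :: c.toWord) := by
                conv_lhs => rw [← FreeGroup.mk_toWord (x := c)]
                rw [show ((i, true) :: c.toWord) = [(i, true)] ++ c.toWord from rfl,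
                  ← FreeGroup.mul_mk]
                rfl
              rw [hmul, FreeGroup.toWord_mk]
              apply reduce_cons_of_ne' (reduce_toWord c)
              intro p hp
              rw [h] at hp
              simp only [List.head?_cons, Option.mem_def, Option.some.injEq] at hp
              subst hp
              rintro ⟨h1, -⟩
              exact hji h1.symm
            have e2 : ((FreeGroup.of i)⁻¹ * c⁻¹).toWord = (i, false) :: (c⁻¹).toWord := by
              have hinv : (FreeGroup.of i)⁻¹ = FreeGroup.mk [(i, false)] := by
                rw [show FreeGroup.of i = FreeGroup.mk [(i, true)] from rfl, FreeGroup.inv_mk]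
                simp [FreeGroup.invRev]
              have hmul : (FreeGroup.of i)⁻¹ * c⁻¹ = FreeGroup.mk ((i, false) :: (c⁻¹).toWord) := by
                conv_lhs => rw [← FreeGroup.mk_toWord (x := c⁻¹)]
                rw [hinv, show ((i, false) :: (c⁻¹).toWord) = [(i, false)] ++ (c⁻¹).toWord from rfl,
                  ← FreeGroup.mul_mk]
              rw [hmul, FreeGroup.toWord_mk]
              apply reduce_cons_of_ne' (reduce_toWord c⁻¹)
              intro p hp
              rw [h2] at hp
              simp only [List.head?_cons, Option.mem_def, Option.some.injEq] at hp
              subst hp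
              rintro ⟨h1, -⟩
              exact hj2 h1.symm
            have e3 : (FreeGroup.of i)⁻¹ * c⁻¹ = (FreeGroup.of i * c)⁻¹ := by
              rw [hcomm.eq, mul_inv_rev]
            rw [e3] at e2
            rw [FreeGroup.toWord_inv, e1, invRev_cons', FreeGroup.toWord_inv] at e2
            -- e2 : (i, false) :: invRev c.toWord = invRev c.toWord ++ [(i, true).neg]
            have hmem : ((j2, b2) : α × Bool) ∈ FreeGroup.invRev c.toWord := by
              have : (c⁻¹).toWord = (j2, b2) :: t2 := h2
              rw [FreeGroup.toWord_inv] at this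
              rw [this]; exact List.mem_cons_self
            simp only [Bool.not_true] at e2
            have := all_eq_of_cons_eq_append e2.symm _ hmem
            exact hj2 (by simpa using congrArg Prod.fst this)

/-- The restriction of the IA-automorphism group of `F_n` to the kernel `W` of
`ι : F_n → ℤ/dℤ` is injective: an IA-automorphism fixing every element of `W`
is the identity. -/
theorem IA_restriction_to_kernel_injective (n d : ℕ) (hn : 2 ≤ n) (hd : 2 ≤ d)
    (ι : FreeGroup (Fin n) →* Multiplicative (ZMod d))
    (hι : ι = FreeGroup.lift
      (fun i => Multiplicative.ofAdd (if i = ⟨0, by omega⟩ then (1 : ZMod d) else 0)))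
    (σ : MulAut (FreeGroup (Fin n)))
    (hσ : ∀ x : FreeGroup (Fin n), σ x * x⁻¹ ∈ commutator (FreeGroup (Fin n)))
    (hfix : ∀ w ∈ ι.ker, σ w = w) :
    ∀ x : FreeGroup (Fin n), σ x = x := by
  have h0n : 0 < n := by omega
  have h1n : 1 < n := by omega
  set i0 : Fin n := ⟨0, h0n⟩ with hi0
  set i1 : Fin n := ⟨1, h1n⟩ with hi1
  have hι1 : ∀ i : Fin n, i ≠ i0 → ι (FreeGroup.of i) = 1 := by
    intro i hi
    rw [hι, FreeGroup.lift_apply_of, if_neg (by exact hi)]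
    rfl
  have hker : ∀ i : Fin n, i ≠ i0 → σ (FreeGroup.of i) = FreeGroup.of i := fun i hi =>
    hfix _ (by rw [MonoidHom.mem_ker]; exact hι1 i hi)
  set x0 : FreeGroup (Fin n) := FreeGroup.of i0 with hx0def
  set x1 : FreeGroup (Fin n) := FreeGroup.of i1 with hx1def
  have hi10 : i1 ≠ i0 := by
    simp only [hi0, hi1, ne_eq, Fin.mk.injEq]
    omega
  have hx1 : σ x1 = x1 := hker i1 hi10
  have hw : x0 * x1 * x0⁻¹ ∈ ι.ker := by
    rw [MonoidHom.mem_ker, _root_.map_mul, _root_.map_mul, _root_.map_inv, hι1 i1 hi10, mul_one,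
      mul_inv_cancel]
  have h5 := hfix _ hw
  rw [_root_.map_mul, _root_.map_mul, _root_.map_inv, hx1] at h5
  set u : FreeGroup (Fin n) := x0⁻¹ * σ x0 with hu
  have hcu : Commute x1 u := by
    have key : x0 * (x1 * u) = x0 * (u * x1) := by
      calc x0 * (x1 * u) = x0 * x1 * x0⁻¹ * σ x0 := by rw [hu]; group
        _ = σ x0 * x1 * (σ x0)⁻¹ * σ x0 := by rw [h5]
        _ = σ x0 * x1 := by group
        _ = x0 * (u * x1) := by rw [hu]; group
    exact mul_left_cancel key
  have hu_comm : u ∈ commutator (FreeGroup (Fin n)) := by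
    have h6 := hσ x0
    have heq : u = x0⁻¹ * (σ x0 * x0⁻¹) * (x0⁻¹)⁻¹ := by rw [hu]; group
    rw [heq]
    exact Subgroup.Normal.conj_mem inferInstance _ h6 x0⁻¹
  obtain ⟨k, hk⟩ := commute_of_eq_zpow' u.toWord.length u i1 le_rfl hcu
  set f : FreeGroup (Fin n) →* Multiplicative ℤ :=
    FreeGroup.lift (fun i => Multiplicative.ofAdd (if i = i1 then (1 : ℤ) else 0)) with hf
  have hfu : f u = 1 := Abelianization.commutator_subset_ker f hu_comm
  rw [hk, _root_.map_zpow, hf, FreeGroup.lift_apply_of, if_pos rfl] at hfu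
  have hk0 : k = 0 := by
    have := congrArg Multiplicative.toAdd hfu
    simpa using this
  have hx0 : σ x0 = x0 := by
    have hu1 : u = 1 := by rw [hk, hk0, zpow_zero]
    rw [hu] at hu1
    exact (inv_mul_eq_one.mp hu1).symm
  have hgen : ∀ i : Fin n, σ.toMonoidHom (FreeGroup.of i) = (MonoidHom.id _) (FreeGroup.of i) := by
    intro i
    by_cases hi : i = i0
    · subst hi; exact hx0
    · exact hker i hi
  intro x
  exact DFunLike.congr_fun (FreeGroup.ext_hom σ.toMonoidHom (MonoidHom.id _) hgen) x
end

section
/- Let F_n be the free group on x_1,...,x_n with n ≥ 5 and i, j, l, m, p distinct indices. With Magnus generators K_{ab} (x_a ↦ x_b⁻¹ x_a x_b) and K_{abc} (x_a ↦ x_a [x_b, x_c]) fixing other generators, the composite automorphism K_{mp} ∘ K_{il} ∘ K_{iml} ∘ K_{ijm} ∘ K_{ilj} ∘ K_{il}⁻¹ ∘ K_{mp}⁻¹ (applied right-to-left starting with K_{mp}) sends x_i to x_i x_j x_l⁻¹ x_p x_m x_p⁻¹ x_j⁻¹ x_l x_p x_m⁻¹ x_p⁻¹ and fixes x_t for all t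 ≠ i. -/
open FreeGroup
open scoped commutatorElement

/-- Magnus generator `K_{ab}`: sends `x_a ↦ x_b⁻¹ x_a x_b`, fixing the other generators. -/
def Kconj {n : ℕ} (a b : Fin n) : FreeGroup (Fin n) →* FreeGroup (Fin n) :=
  FreeGroup.lift (fun t => if t = a then (of b)⁻¹ * of a * of b else of t)

/-- Inverse of the Magnus generator `K_{ab}`: sends `x_a ↦ x_b x_a x_b⁻¹`. -/
def KconjInv {n : ℕ} (a b : Fin n) : FreeGroup (Fin n) →* FreeGroup (Fin n) :=
  FreeGroup.lift (fun t => if t = a then of b * of a * (of b)⁻¹ else of t)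

/-- Magnus generator `K_{abc}`: sends `x_a ↦ x_a [x_b, x_c]`, fixing the other generators. -/
def Kcomm {n : ℕ} (a b c : Fin n) : FreeGroup (Fin n) →* FreeGroup (Fin n) :=
  FreeGroup.lift (fun t => if t = a then of a * ⁅of b, of c⁆ else of t)

/-- Lemma 3.2 of the paper: the composite
`K_{mp}⁻¹ ∘ K_{il}⁻¹ ∘ K_{ilj} ∘ K_{ijm} ∘ K_{iml} ∘ K_{il} ∘ K_{mp}`
(applying `K_{mp}` first) sends `x_i` to
`x_i x_j x_l⁻¹ x_p x_m x_p⁻¹ x_j⁻¹ x_l x_p x_m⁻¹ x_p⁻¹` and fixes every other generator. -/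
theorem magnus_word_lemma_two (n : ℕ) (hn : 5 ≤ n) (i j l m p : Fin n)
    (hij : i ≠ j) (hil : i ≠ l) (him : i ≠ m) (hip : i ≠ p)
    (hjl : j ≠ l) (hjm : j ≠ m) (hjp : j ≠ p)
    (hlm : l ≠ m) (hlp : l ≠ p) (hmp : m ≠ p) :
    (((KconjInv m p).comp ((KconjInv i l).comp ((Kcomm i l j).comp ((Kcomm i j m).comp
        ((Kcomm i m l).comp ((Kconj i l).comp (Kconj m p))))))) (of i)
      = of i * of j * (of l)⁻¹ * of p * of m * (of p)⁻¹ * (of j)⁻¹ * of l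
          * of p * (of m)⁻¹ * (of p)⁻¹) ∧
    (∀ t : Fin n, t ≠ i →
      (((KconjInv m p).comp ((KconjInv i l).comp ((Kcomm i l j).comp ((Kcomm i j m).comp
        ((Kcomm i m l).comp ((Kconj i l).comp (Kconj m p))))))) (of t) = of t)) := by
  constructor
  · simp only [MonoidHom.comp_apply, Kconj, KconjInv, Kcomm, commutatorElement_def,
      _root_.map_mul, _root_.map_inv, lift_apply_of, if_pos rfl, if_true,
      if_neg hij, if_neg hij.symm, if_neg hil, if_neg hil.symm,
      if_neg him, if_neg him.symm, if_neg hip, if_neg hip.symm,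
      if_neg hjl, if_neg hjl.symm, if_neg hjm, if_neg hjm.symm,
      if_neg hjp, if_neg hjp.symm, if_neg hlm, if_neg hlm.symm,
      if_neg hlp, if_neg hlp.symm, if_neg hmp, if_neg hmp.symm]
    group
  · intro t ht
    by_cases htm : t = m
    · subst htm
      simp only [MonoidHom.comp_apply, Kconj, KconjInv, Kcomm, commutatorElement_def,
        _root_.map_mul, _root_.map_inv, lift_apply_of, if_pos rfl, if_true, if_neg ht,
        if_neg hip.symm, if_neg hmp.symm]
      group
    · simp only [MonoidHom.comp_apply, Kconj, KconjInv, Kcomm, lift_apply_of,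
        if_neg ht, if_neg htm]
end

section
/- The free metabelian group F_n^M = F_n / [[F_n,F_n],[F_n,F_n]] of rank n ≥ 2 has trivial center. -/
instance (G : Type*) [Group G] (n : ℕ) : (derivedSeries G n).Normal :=
  derivedSeries_normal G n

open MonoidAlgebra
open scoped commutatorElement

noncomputable section

namespace FreeMetabelianProof

/-- Magnus-type semidirect product `G ⋉ (Fin n → ℤ[G])ⁿ`. -/
@[ext]
structure Mag (n : ℕ) (G : Type*) [Group G] where
  fst : G
  snd : Fin n → MonoidAlgebra ℤ G

namespace Mag

variable {n : ℕ} {G H : Type*} [Group G] [Group H]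

instance : Mul (Mag n G) :=
  ⟨fun p q => ⟨p.fst * q.fst, fun j => p.snd j + single p.fst 1 * q.snd j⟩⟩

instance : One (Mag n G) := ⟨⟨1, 0⟩⟩

instance : Inv (Mag n G) := ⟨fun p => ⟨p.fst⁻¹, fun j => -(single p.fst⁻¹ 1 * p.snd j)⟩⟩

@[simp] theorem mul_fst (p q : Mag n G) : (p * q).fst = p.fst * q.fst := rfl
@[simp] theorem mul_snd (p q : Mag n G) (j : Fin n) :
    (p * q).snd j = p.snd j + single p.fst 1 * q.snd j := rfl
@[simp] theorem one_fst : (1 : Mag n G).fst = 1 := rfl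
@[simp] theorem one_snd (j : Fin n) : (1 : Mag n G).snd j = 0 := rfl
@[simp] theorem inv_fst (p : Mag n G) : (p⁻¹).fst = p.fst⁻¹ := rfl
@[simp] theorem inv_snd (p : Mag n G) (j : Fin n) :
    (p⁻¹).snd j = -(single p.fst⁻¹ 1 * p.snd j) := rfl

theorem single_one_eq_one : (single (1 : G) (1 : ℤ) : MonoidAlgebra ℤ G) = 1 :=
  (MonoidAlgebra.one_def).symm

instance : Group (Mag n G) where
  mul_assoc p q r := by
    refine Mag.ext (mul_assoc _ _ _) (funext fun j => ?_)
    · show (p.snd j + single p.fst 1 * q.snd j) + single (p.fst * q.fst) 1 * r.snd j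
        = p.snd j + single p.fst 1 * (q.snd j + single q.fst 1 * r.snd j)
      have h : (single (p.fst * q.fst) 1 : MonoidAlgebra ℤ G)
          = single p.fst 1 * single q.fst 1 := by
        rw [single_mul_single, mul_one]
      rw [h, mul_add, mul_assoc, add_assoc]
  one_mul p := by
    refine Mag.ext (one_mul _) (funext fun j => ?_)
    · show 0 + single (1 : G) 1 * p.snd j = p.snd j
      rw [single_one_eq_one, one_mul, zero_add]
  mul_one p := by
    refine Mag.ext (mul_one _) (funext fun j => ?_)
    · show p.snd j + single p.fst 1 * 0 = p.snd j
      rw [mul_zero, add_zero]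
  inv_mul_cancel p := by
    refine Mag.ext (inv_mul_cancel _) (funext fun j => ?_)
    · show -(single p.fst⁻¹ 1 * p.snd j) + single p.fst⁻¹ 1 * p.snd j = 0
      exact neg_add_cancel _

/-- First projection as a group hom. -/
noncomputable def fstHom : Mag n G →* G where
  toFun := Mag.fst
  map_one' := rfl
  map_mul' _ _ := rfl

/-- `Finsupp.mapDomain` with the right target type annotation. -/
abbrev mapD (f : G →* H) (x : MonoidAlgebra ℤ G) : MonoidAlgebra ℤ H :=
  MonoidAlgebra.mapDomain f x

theorem mapD_add (f : G →* H) (x y : MonoidAlgebra ℤ G) :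
    mapD f (x + y) = mapD f x + mapD f y := MonoidAlgebra.mapDomain_add f x y

theorem mapD_mul (f : G →* H) (x y : MonoidAlgebra ℤ G) :
    mapD f (x * y) = mapD f x * mapD f y := MonoidAlgebra.mapDomain_mul f x y

theorem mapD_single (f : G →* H) (a : G) (b : ℤ) :
    mapD f (single a b) = single (f a) b := MonoidAlgebra.mapDomain_single

/-- Functoriality of `Mag`. -/
noncomputable def mapHom (f : G →* H) : Mag n G →* Mag n H where
  toFun p := ⟨f p.fst, fun j => mapD f (p.snd j)⟩
  map_one' := by
    refine Mag.ext (map_one f) (funext fun j => ?_)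
    show mapD f 0 = 0
    exact MonoidAlgebra.mapDomain_zero f
  map_mul' p q := by
    refine Mag.ext (map_mul f _ _) (funext fun j => ?_)
    · show mapD f (p.snd j + single p.fst 1 * q.snd j)
        = mapD f (p.snd j) + single (f p.fst) 1 * mapD f (q.snd j)
      rw [mapD_add, mapD_mul, mapD_single]

@[simp] theorem mapHom_fst (f : G →* H) (p : Mag n G) : (mapHom f p).fst = f p.fst := rfl
@[simp] theorem mapHom_snd (f : G →* H) (p : Mag n G) (j : Fin n) :
    (mapHom f p).snd j = mapD f (p.snd j) := rfl

/-- `Mag n H` is metabelian when `H` is commutative. -/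
theorem derivedSeries_two_eq_bot (n : ℕ) (H : Type*) [CommGroup H] :
    derivedSeries (Mag n H) 2 = ⊥ := by
  have h1 : derivedSeries (Mag n H) 1 ≤ (fstHom (n := n) (G := H)).ker := by
    rw [derivedSeries_one, commutator_def, Subgroup.commutator_le]
    intro g _ h _
    rw [MonoidHom.mem_ker, map_commutatorElement]
    exact commutatorElement_eq_one_iff_commute.mpr (mul_comm _ _)
  have h2 : ∀ a b : Mag n H, a ∈ (fstHom (n := n) (G := H)).ker →
      b ∈ (fstHom (n := n) (G := H)).ker → ⁅a, b⁆ = 1 := by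
    intro a b ha hb
    rw [MonoidHom.mem_ker] at ha hb
    refine commutatorElement_eq_one_iff_commute.mpr ?_
    show a * b = b * a
    refine Mag.ext ?_ (funext fun j => ?_)
    · show a.fst * b.fst = b.fst * a.fst
      rw [show a.fst = 1 from ha, show b.fst = 1 from hb]
    · show a.snd j + single a.fst 1 * b.snd j = b.snd j + single b.fst 1 * a.snd j
      rw [show a.fst = 1 from ha, show b.fst = 1 from hb, single_one_eq_one, one_mul,
        one_mul, add_comm]
  rw [show (2 : ℕ) = 1 + 1 from rfl, derivedSeries_succ, eq_bot_iff]
  refine le_trans (Subgroup.commutator_mono h1 h1) ?_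
  rw [Subgroup.commutator_le]
  intro g hg h hh
  rw [h2 g h hg hh]
  exact Subgroup.one_mem ⊥

end Mag

section FreeGroupPart

variable (n : ℕ)

/-- Fox-derivative / Magnus homomorphism into `Mag n (FreeGroup (Fin n))`. -/
def Phi : FreeGroup (Fin n) →* Mag n (FreeGroup (Fin n)) :=
  FreeGroup.lift fun i => ⟨FreeGroup.of i, fun j => if j = i then 1 else 0⟩

theorem Phi_of (i : Fin n) :
    Phi n (.of i) = ⟨.of i, fun j => if j = i then 1 else 0⟩ :=
  FreeGroup.lift_apply_of

theorem Phi_fst (g : FreeGroup (Fin n)) : (Phi n g).fst = g := by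
  have h : (Mag.fstHom).comp (Phi n) = MonoidHom.id (FreeGroup (Fin n)) :=
    FreeGroup.ext_hom _ _ fun a => by rw [MonoidHom.comp_apply, Phi_of]; rfl
  exact DFunLike.congr_fun h g

/-- The Fox fundamental identity. -/
theorem fund (g : FreeGroup (Fin n)) :
    (single g 1 - 1 : MonoidAlgebra ℤ (FreeGroup (Fin n)))
      = ∑ j : Fin n, (Phi n g).snd j * (single (FreeGroup.of j) 1 - 1) := by
  induction g using FreeGroup.induction_on with
  | C1 =>
      rw [_root_.map_one]
      simp only [Mag.one_snd, zero_mul, Finset.sum_const_zero, Mag.single_one_eq_one, sub_self]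
  | of x =>
      rw [Phi_of]
      simp only [ite_mul, one_mul, zero_mul]
      rw [Finset.sum_ite_eq' Finset.univ x (fun j => (single (FreeGroup.of j) 1 - 1 :
        MonoidAlgebra ℤ (FreeGroup (Fin n)))), if_pos (Finset.mem_univ x)]
  | inv_of x _ =>
      rw [_root_.map_inv, Phi_of]
      have hterm : ∀ j : Fin n,
          ((⟨FreeGroup.of x, fun j => if j = x then 1 else 0⟩ :
              Mag n (FreeGroup (Fin n)))⁻¹).snd j * (single (FreeGroup.of j) 1 - 1)
          = if j = x then -(single (FreeGroup.of x)⁻¹ 1 * (single (FreeGroup.of j) 1 - 1))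
            else 0 := by
        intro j
        rw [Mag.inv_snd]
        dsimp only
        by_cases h : j = x
        · rw [if_pos h, if_pos h, mul_one, neg_mul]
        · rw [if_neg h, if_neg h, mul_zero, neg_zero, zero_mul]
      rw [Finset.sum_congr rfl fun j _ => hterm j, Finset.sum_ite_eq' Finset.univ x,
        if_pos (Finset.mem_univ x), mul_sub, mul_one, single_mul_single, inv_mul_cancel,
        one_mul, Mag.single_one_eq_one, neg_sub]
  | mul x y ihx ihy =>
      rw [_root_.map_mul]
      simp only [Mag.mul_snd, add_mul, Finset.sum_add_distrib, ← ihx]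
      have h2 : ∑ j : Fin n, single (Phi n x).fst 1 * (Phi n y).snd j *
          (single (FreeGroup.of j) 1 - 1)
          = single x (1 : ℤ) * (single y 1 - 1) := by
        simp only [mul_assoc]
        rw [← Finset.mul_sum, ← ihy, Phi_fst]
      rw [h2, mul_sub, mul_one, single_mul_single, one_mul]
      abel

end FreeGroupPart

section Laurent

/-- In a group algebra over a group with a torsion-free element `q`,
`single q 1 * f = f` forces `f = 0`. -/
theorem eq_zero_of_single_mul_eq_self {H : Type*} [Group H] {q : H}
    (hq : ∀ k : ℕ, 0 < k → q ^ k ≠ 1) {f : MonoidAlgebra ℤ H}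
    (h : single q 1 * f = f) : f = 0 := by
  by_contra hf
  obtain ⟨x0, hx0⟩ := Finsupp.support_nonempty_iff.mpr (mt MonoidAlgebra.coeff_eq_zero.mp hf)
  have hpt : ∀ x : H, f.coeff (q⁻¹ * x) = f.coeff x := by
    intro x
    have := congrArg (fun v : MonoidAlgebra ℤ H => v.coeff x) h
    simpa [MonoidAlgebra.coeff_single_mul_apply] using this
  have key : ∀ k : ℕ, f.coeff (q ^ k * x0) = f.coeff x0 := by
    intro k
    induction k with
    | zero => rw [pow_zero, one_mul]
    | succ k ih =>
        have := hpt (q ^ (k + 1) * x0)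
        rw [show q⁻¹ * (q ^ (k + 1) * x0) = q ^ k * x0 by
          rw [pow_succ']; group] at this
        rw [← this, ih]
  have hpow : ∀ a b : ℕ, a < b → q ^ a = q ^ b → False := by
    intro a b hlt heq
    apply hq (b - a) (by omega)
    have h1 : q ^ (b - a) * q ^ a = q ^ b := by
      rw [← pow_add, Nat.sub_add_cancel (le_of_lt hlt)]
    rw [← heq] at h1
    exact mul_right_cancel (h1.trans (one_mul (q ^ a)).symm)
  have hinj : Function.Injective fun k : ℕ => q ^ k * x0 := by
    intro a b hab
    simp only [mul_left_inj] at hab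
    rcases lt_trichotomy a b with h | h | h
    · exact absurd hab (fun hh => hpow a b h hh)
    · exact h
    · exact absurd hab.symm (fun hh => hpow b a h hh)
  have hinf : (↑f.coeff.support : Set H).Infinite :=
    Set.infinite_of_injective_forall_mem hinj fun k => by
      rw [Finset.mem_coe, Finsupp.mem_support_iff, key k]
      exact Finsupp.mem_support_iff.mp hx0
  exact hinf f.coeff.support.finite_toSet

end Laurent

section Abel

theorem of_eq_one_iff {G : Type*} [Group G] (x : G) :
    Abelianization.of x = 1 ↔ x ∈ commutator G :=
  QuotientGroup.eq_one_iff x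

theorem abel_of_pow_ne_one (n : ℕ) (i : Fin n) (k : ℕ) (hk : 0 < k) :
    (Abelianization.of (FreeGroup.of i : FreeGroup (Fin n))) ^ k ≠ 1 := by
  intro h
  set ψ : FreeGroup (Fin n) →* Multiplicative ℤ :=
    FreeGroup.lift fun j => Multiplicative.ofAdd (if j = i then (1 : ℤ) else 0) with hψ
  have h2 := congrArg (Abelianization.lift ψ) h
  rw [_root_.map_pow, _root_.map_one, Abelianization.lift_apply_of, hψ, FreeGroup.lift_apply_of,
    if_pos rfl] at h2
  have h4 : Multiplicative.ofAdd (k • (1 : ℤ)) = Multiplicative.ofAdd 0 := by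
    rw [ofAdd_nsmul, ofAdd_zero]
    exact h2
  have h5 := Multiplicative.ofAdd.injective h4
  simp only [nsmul_eq_mul, mul_one] at h5
  omega

end Abel

section Kernel

variable (n : ℕ)

local notation "F" => FreeGroup (Fin n)

/-- Additive subgroup generated by `(r - 1)·g`, `r` in the commutator subgroup. -/
def W : AddSubgroup (MonoidAlgebra ℤ F) :=
  AddSubgroup.closure
    {x | ∃ r ∈ commutator F, ∃ g : F, x = (single r 1 - 1) * single g 1}

/-- Additive subgroup generated by `(r - 1)·g·(x_j - 1)`. -/
def T : AddSubgroup (MonoidAlgebra ℤ F) :=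
  AddSubgroup.closure
    {x | ∃ r ∈ commutator F, ∃ g : F, ∃ j : Fin n,
      x = (single r 1 - 1) * single g 1 * (single (FreeGroup.of j) 1 - 1)}

theorem mem_W_of_mapD_eq_zero :
    ∀ f : MonoidAlgebra ℤ F, Mag.mapD Abelianization.of f = 0 → f ∈ W n := by
  classical
  suffices h : ∀ (N : ℕ) (f : MonoidAlgebra ℤ F), f.coeff.support.card ≤ N →
      Mag.mapD Abelianization.of f = 0 → f ∈ W n by
    exact fun f hf => h f.coeff.support.card f le_rfl hf
  intro N
  induction N with
  | zero =>
      intro f hcard _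
      rw [MonoidAlgebra.coeff_eq_zero.mp (Finsupp.support_eq_empty.mp (Finset.card_eq_zero.mp (Nat.le_zero.mp hcard)))]
      exact AddSubgroup.zero_mem _
  | succ N ih =>
      intro f hcard hker
      by_cases hf0 : f = 0
      · rw [hf0]; exact AddSubgroup.zero_mem _
      obtain ⟨g0, hg0⟩ := Finsupp.support_nonempty_iff.mpr (mt MonoidAlgebra.coeff_eq_zero.mp hf0)
      have hfg0 : f.coeff g0 ≠ 0 := Finsupp.mem_support_iff.mp hg0
      have hsum : ∑ g ∈ f.coeff.support,
          (if Abelianization.of g = Abelianization.of g0 then f.coeff g else 0) = 0 := by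
        have h0 : (Mag.mapD Abelianization.of f).coeff (Abelianization.of g0) = 0 := by
          rw [hker]; rfl
        rw [Mag.mapD, MonoidAlgebra.mapDomain, MonoidAlgebra.coeff_ofCoeff, Finsupp.mapDomain, Finsupp.sum_apply, Finsupp.sum] at h0
        refine Eq.trans (Finset.sum_congr rfl fun g _ => ?_) h0
        rw [Finsupp.single_apply]
      have hex : ∃ g1 ∈ f.coeff.support, g1 ≠ g0 ∧
          Abelianization.of g1 = Abelianization.of g0 := by
        by_contra hno
        push_neg at hno
        rw [Finset.sum_eq_single g0 (fun b hb hbne => if_neg (hno b hb hbne))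
          (fun hng => absurd hg0 hng), if_pos rfl] at hsum
        exact hfg0 hsum
      obtain ⟨g1, hg1mem, hg1ne, hg1eq⟩ := hex
      have hfg1 : f.coeff g1 ≠ 0 := Finsupp.mem_support_iff.mp hg1mem
      set c := f.coeff g1 with hc
      set f' := f + single g0 c - single g1 c with hf'
      have hf'val : ∀ x, f'.coeff x = if x = g1 then 0 else if x = g0 then f.coeff g0 + c else f.coeff x := by
        intro x
        rw [hf', MonoidAlgebra.coeff_sub, MonoidAlgebra.coeff_add, MonoidAlgebra.coeff_single,
          MonoidAlgebra.coeff_single, Finsupp.sub_apply, Finsupp.add_apply, Finsupp.single_apply,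
          Finsupp.single_apply]
        by_cases h1 : x = g1
        · subst h1
          rw [if_pos rfl, if_neg (fun hh : g0 = x => hg1ne hh.symm), if_pos rfl]
          omega
        · rw [if_neg h1, if_neg (fun hh : g1 = x => h1 hh.symm)]
          by_cases h2 : x = g0
          · subst h2
            rw [if_pos rfl, if_pos rfl]
            omega
          · rw [if_neg h2, if_neg (fun hh : g0 = x => h2 hh.symm)]
            omega
      have hf'supp : f'.coeff.support ⊆ f.coeff.support.erase g1 := by
        intro x hx
        rw [Finsupp.mem_support_iff, hf'val] at hx
        rw [Finset.mem_erase]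
        by_cases h1 : x = g1
        · exact absurd (by rw [if_pos h1]) hx
        refine ⟨h1, Finsupp.mem_support_iff.mpr ?_⟩
        rw [if_neg h1] at hx
        by_cases h2 : x = g0
        · subst h2; exact hfg0
        · rwa [if_neg h2] at hx
      have hcard' : f'.coeff.support.card ≤ N := by
        have h3 := Finset.card_le_card hf'supp
        rw [Finset.card_erase_of_mem hg1mem] at h3
        omega
      have hker' : Mag.mapD Abelianization.of f' = 0 := by
        have hmd : ∀ u v : MonoidAlgebra ℤ F,
            Mag.mapD (Abelianization.of (G := F)) (u - v)
            = Mag.mapD Abelianization.of u - Mag.mapD Abelianization.of v := fun u v =>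
          map_sub (MonoidAlgebra.mapDomainRingHom (R := ℤ) (Abelianization.of (G := F))) u v
        rw [hf', hmd, Mag.mapD_add, Mag.mapD_single, Mag.mapD_single, hg1eq, hker]
        abel
      have hW' := ih f' hcard' hker'
      have hr : g1 * g0⁻¹ ∈ commutator F :=
        (of_eq_one_iff _).mp (by rw [map_mul, map_inv, hg1eq, mul_inv_cancel])
      have hdiff : single g1 c - single g0 c ∈ W n := by
        have hkey : (single (g1 * g0⁻¹) 1 - 1 : MonoidAlgebra ℤ F) * single g0 c
            = single g1 c - single g0 c := by
          simp only [sub_mul, single_mul_single, one_mul, inv_mul_cancel_right]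
        have hsmul : (single g0 c : MonoidAlgebra ℤ F) = c • single g0 (1 : ℤ) := by
          rw [MonoidAlgebra.smul_single, smul_eq_mul, mul_one]
        rw [← hkey, hsmul, mul_smul_comm]
        have hgen : (single (g1 * g0⁻¹) 1 - 1 : MonoidAlgebra ℤ F) * single g0 1 ∈ W n := by
          rw [W]
          exact AddSubgroup.subset_closure ⟨g1 * g0⁻¹, hr, g0, rfl⟩
        exact AddSubgroup.zsmul_mem _ hgen c
      have hfeq : f = f' + (single g1 c - single g0 c) := by rw [hf']; abel
      rw [hfeq]
      exact AddSubgroup.add_mem _ hW' hdiff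

theorem mul_mem_T {f : MonoidAlgebra ℤ F} (hf : f ∈ W n) (j : Fin n) :
    f * (single (FreeGroup.of j) 1 - 1) ∈ T n := by
  have hle : W n ≤ (T n).comap
      (AddMonoidHom.mulRight (single (FreeGroup.of j) 1 - 1 : MonoidAlgebra ℤ F)) := by
    rw [W, AddSubgroup.closure_le]
    rintro x ⟨r, hr, g, rfl⟩
    simp only [SetLike.mem_coe, AddSubgroup.mem_comap, AddMonoidHom.mulRight_apply]
    rw [T]
    exact AddSubgroup.subset_closure ⟨r, hr, g, j, rfl⟩
  exact hle hf

/-- The coset-representative defect map. -/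
def rho (g : F) : F := g * ((QuotientGroup.mk g : F ⧸ commutator F).out)⁻¹

theorem rho_mem (g : F) : rho n g ∈ commutator F := by
  have : (QuotientGroup.mk (rho n g) : F ⧸ commutator F) = 1 := by
    rw [rho, QuotientGroup.mk_mul, QuotientGroup.mk_inv]
    rw [show (QuotientGroup.mk ((QuotientGroup.mk g : F ⧸ commutator F).out) :
      F ⧸ commutator F) = QuotientGroup.mk g from Quotient.out_eq' _]
    rw [mul_inv_cancel]
  exact (QuotientGroup.eq_one_iff _).mp this

/-- Class of `rho g` in the abelianization of the commutator subgroup, additively. -/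
def Aelt (g : F) : Additive (Abelianization ↥(commutator F)) :=
  Additive.ofMul (Abelianization.of (⟨rho n g, rho_mem n g⟩ : ↥(commutator F)))

/-- The ℤ-linear "leading coefficient in `R_ab`" map. -/
def Theta : MonoidAlgebra ℤ F →+ Additive (Abelianization ↥(commutator F)) :=
  (Finsupp.liftAddHom fun g => zmultiplesHom _ (Aelt n g)).comp
    MonoidAlgebra.coeffAddEquiv.toAddMonoidHom

theorem Theta_single (g : F) (c : ℤ) : Theta n (single g c) = c • Aelt n g :=
  Finsupp.liftAddHom_apply_single _ _ _

theorem Aelt_mul {r : F} (hr : r ∈ commutator F) (g : F) :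
    Aelt n (r * g)
      = Additive.ofMul (Abelianization.of (⟨r, hr⟩ : ↥(commutator F))) + Aelt n g := by
  have hout : (QuotientGroup.mk (r * g) : F ⧸ commutator F).out
      = (QuotientGroup.mk g : F ⧸ commutator F).out := by
    have : (QuotientGroup.mk (r * g) : F ⧸ commutator F) = QuotientGroup.mk g := by
      rw [QuotientGroup.mk_mul, (QuotientGroup.eq_one_iff _).mpr hr, one_mul]
    rw [this]
  have hrho : rho n (r * g) = r * rho n g := by
    rw [rho, rho, hout, mul_assoc]
  have hsub : (⟨rho n (r * g), rho_mem n (r * g)⟩ : ↥(commutator F))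
      = ⟨r, hr⟩ * ⟨rho n g, rho_mem n g⟩ := Subtype.ext hrho
  rw [Aelt, hsub, map_mul]
  rfl

theorem Theta_T_eq_zero {x : MonoidAlgebra ℤ F} (hx : x ∈ T n) : Theta n x = 0 := by
  rw [T] at hx
  induction hx using AddSubgroup.closure_induction with
  | mem x hmem =>
      obtain ⟨r, hr, g, j, rfl⟩ := hmem
      have hexp : (single r 1 - 1 : MonoidAlgebra ℤ F) * single g 1 *
          (single (FreeGroup.of j) 1 - 1)
          = single (r * (g * FreeGroup.of j)) 1 - single (g * FreeGroup.of j) 1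
            - single (r * g) 1 + single g 1 := by
        simp only [sub_mul, mul_sub, one_mul, mul_one, single_mul_single, mul_assoc]
        abel
      rw [hexp, map_add, map_sub, map_sub, Theta_single, Theta_single, Theta_single,
        Theta_single, one_zsmul, one_zsmul, one_zsmul, one_zsmul,
        Aelt_mul n hr (g * FreeGroup.of j), Aelt_mul n hr g]
      abel
  | zero => exact map_zero _
  | add x y _ _ hx hy => rw [map_add, hx, hy, add_zero]
  | neg x _ hx => rw [map_neg, hx, neg_zero]

theorem mem_derivedSeries_two_of (w : F) (hw : w ∈ commutator F)
    (hT : (single w 1 - 1 : MonoidAlgebra ℤ F) ∈ T n) :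
    w ∈ derivedSeries F 2 := by
  have h1 : Theta n (single w 1 - 1) = 0 := Theta_T_eq_zero n hT
  rw [map_sub, MonoidAlgebra.one_def, Theta_single, Theta_single, one_zsmul, one_zsmul] at h1
  have h2 : Aelt n w
      = Additive.ofMul (Abelianization.of (⟨w, hw⟩ : ↥(commutator F))) + Aelt n 1 := by
    have := Aelt_mul n (r := w) hw 1
    rwa [mul_one] at this
  rw [h2, add_sub_cancel_right] at h1
  have h4 : Abelianization.of (⟨w, hw⟩ : ↥(commutator F)) = 1 := ofMul_eq_zero.mp h1
  have h5 : (⟨w, hw⟩ : ↥(commutator F)) ∈ commutator ↥(commutator F) :=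
    (of_eq_one_iff _).mp h4
  have h6 : w ∈ Subgroup.map (commutator F).subtype (commutator ↥(commutator F)) :=
    ⟨⟨w, hw⟩, h5, rfl⟩
  rw [show commutator ↥(commutator F) = ⁅(⊤ : Subgroup ↥(commutator F)), ⊤⁆ from rfl,
    Subgroup.map_commutator, ← MonoidHom.range_eq_map, Subgroup.range_subtype] at h6
  rw [show (2 : ℕ) = 1 + 1 from rfl, derivedSeries_succ, derivedSeries_one]
  exact h6

end Kernel

end FreeMetabelianProof

open FreeMetabelianProof

/-- The free metabelian group `F_n / [[F_n,F_n],[F_n,F_n]]` of rank `n ≥ 2`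
has trivial center. -/
theorem freeMetabelian_center_trivial (n : ℕ) (hn : 2 ≤ n) :
    Subgroup.center (FreeGroup (Fin n) ⧸ derivedSeries (FreeGroup (Fin n)) 2) = ⊥ := by
  rw [eq_bot_iff]
  intro z hz
  obtain ⟨w, rfl⟩ := QuotientGroup.mk_surjective z
  rw [Subgroup.mem_bot]
  suffices hW2 : w ∈ derivedSeries (FreeGroup (Fin n)) 2 by
    exact (QuotientGroup.eq_one_iff _).mpr hW2
  have hcen : ∀ g : FreeGroup (Fin n), ⁅w, g⁆ ∈ derivedSeries (FreeGroup (Fin n)) 2 := by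
    intro g
    have h1 := Subgroup.mem_center_iff.mp hz (QuotientGroup.mk g)
    apply (QuotientGroup.eq_one_iff _).mp
    rw [commutatorElement_def, QuotientGroup.mk_mul, QuotientGroup.mk_mul,
      QuotientGroup.mk_mul, QuotientGroup.mk_inv, QuotientGroup.mk_inv, ← h1]
    group
  set π : FreeGroup (Fin n) →* Abelianization (FreeGroup (Fin n)) :=
    (Abelianization.of : FreeGroup (Fin n) →* Abelianization (FreeGroup (Fin n))) with hπ
  set φ := (Mag.mapHom (n := n) π).comp (Phi n) with hφ
  have hker : ∀ x ∈ derivedSeries (FreeGroup (Fin n)) 2, φ x = 1 := by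
    intro x hx
    have h2 := map_derivedSeries_le_derivedSeries φ 2 (Subgroup.mem_map_of_mem φ hx)
    rw [Mag.derivedSeries_two_eq_bot] at h2
    exact Subgroup.mem_bot.mp h2
  have hcomm : ∀ i : Fin n, φ w * φ (FreeGroup.of i) = φ (FreeGroup.of i) * φ w := by
    intro i
    have h3 := hker _ (hcen (FreeGroup.of i))
    rw [map_commutatorElement] at h3
    exact (commutatorElement_eq_one_iff_commute.mp h3).eq
  have hφof : ∀ i : Fin n, φ (FreeGroup.of i)
      = ⟨π (FreeGroup.of i), fun j => if j = i then 1 else 0⟩ := by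
    intro i
    rw [hφ, MonoidHom.comp_apply, Phi_of]
    refine Mag.ext rfl (funext fun j => ?_)
    show Mag.mapD π (if j = i then 1 else 0) = if j = i then 1 else 0
    by_cases h : j = i
    · rw [if_pos h, if_pos h]; exact MonoidAlgebra.mapDomain_one π
    · rw [if_neg h, if_neg h]; exact MonoidAlgebra.mapDomain_zero _
  have heq : ∀ i j : Fin n,
      (φ w).snd j + single (φ w).fst 1 * (if j = i then 1 else 0)
      = (if j = i then 1 else 0) + single (π (FreeGroup.of i)) 1 * (φ w).snd j := by
    intro i j
    have h7 := congrFun (congrArg Mag.snd (hcomm i)) j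
    rw [hφof i] at h7
    exact h7
  have htf : ∀ i : Fin n, ∀ k : ℕ, 0 < k → (π (FreeGroup.of i)) ^ k ≠ 1 := fun i =>
    abel_of_pow_ne_one n i
  have hL0 : ∀ j : Fin n, (φ w).snd j = 0 := by
    intro j
    obtain ⟨i, hij⟩ : ∃ i : Fin n, j ≠ i := by
      by_cases h : j = ⟨0, by omega⟩
      · refine ⟨⟨1, by omega⟩, ?_⟩
        rw [h]
        intro hh
        exact absurd (congrArg Fin.val hh) (by simp)
      · exact ⟨⟨0, by omega⟩, h⟩
    have h8 := heq i j
    rw [if_neg hij, mul_zero, add_zero, zero_add] at h8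
    exact eq_zero_of_single_mul_eq_self (htf i) h8.symm
  have ha1 : (φ w).fst = 1 := by
    have h9 := heq ⟨0, by omega⟩ ⟨0, by omega⟩
    rw [if_pos rfl, hL0, mul_one, mul_zero, add_zero, zero_add] at h9
    have h10 : (single (φ w).fst 1 : MonoidAlgebra ℤ _) = single 1 1 := by
      rw [h9]
      exact MonoidAlgebra.one_def
    exact MonoidAlgebra.single_left_injective one_ne_zero h10
  have hπw : π w = 1 := by
    have hh : (φ w).fst = π ((Phi n w).fst) := rfl
    rw [hh, Phi_fst] at ha1
    exact ha1
  have hwR : w ∈ commutator (FreeGroup (Fin n)) := (of_eq_one_iff w).mp hπw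
  have hdW : ∀ j : Fin n, (Phi n w).snd j ∈ W n := by
    intro j
    apply mem_W_of_mapD_eq_zero
    have hh : Mag.mapD π ((Phi n w).snd j) = (φ w).snd j := rfl
    rw [hh, hL0 j]
  have hT : (single w 1 - 1 : MonoidAlgebra ℤ (FreeGroup (Fin n))) ∈ T n := by
    rw [fund n w]
    exact AddSubgroup.sum_mem _ fun j _ => mul_mem_T n (hdW j) j
  exact mem_derivedSeries_two_of n w hwR hT
end
end

section
/- The Magnus embedding is injective on centers: let H = Z^n, R = Z[H], and let M be the group of matrices of the form (x, L; 0, 1) with x ∈ H (viewed as units in R) and L = v_1 t_1 + ... + v_n t_n a formal R-linear combination of indeterminates t_1,...,t_n, under the evident multiplication (x,L)(x',L') = (xx', xL' + L). Then the subgroup of M generated by the elements g_i = (x_i, t_i), i = 1,...,n (x_i the standard basis of H), has trivial center for n ≥ 2. -/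
noncomputable section

/-- The group ring `ℤ[ℤⁿ]` (with `ℤⁿ` written multiplicatively). -/
abbrev MagnusRing (n : ℕ) : Type :=
  MonoidAlgebra ℤ (Multiplicative (Fin n → ℤ))

/-- The canonical image of `ℤⁿ` in its group ring. -/
def ofH {n : ℕ} (x : Fin n → ℤ) : MagnusRing n :=
  MonoidAlgebra.of ℤ (Multiplicative (Fin n → ℤ)) (Multiplicative.ofAdd x)

theorem ofH_add {n : ℕ} (x y : Fin n → ℤ) : ofH (x + y) = ofH x * ofH y := by
  unfold ofH
  rw [ofAdd_add, map_mul]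

theorem ofH_zero {n : ℕ} : ofH (0 : Fin n → ℤ) = 1 := by
  unfold ofH
  rw [ofAdd_zero, map_one]

/-- The Magnus group: pairs `(x, (v₁,…,vₙ))` with `x ∈ ℤⁿ`, `vᵢ ∈ ℤ[ℤⁿ]`, representing the
matrix `(x, v₁t₁ + ⋯ + vₙtₙ; 0, 1)`, with multiplication `(x,v)(x',v') = (xx', x·v' + v)`. -/
@[ext]
structure MagnusGroup (n : ℕ) : Type where
  x : Fin n → ℤ
  v : Fin n → MagnusRing n

namespace MagnusGroup

variable {n : ℕ}

instance : Mul (MagnusGroup n) :=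
  ⟨fun a b => ⟨a.x + b.x, fun i => ofH a.x * b.v i + a.v i⟩⟩

instance : One (MagnusGroup n) := ⟨⟨0, 0⟩⟩

instance : Inv (MagnusGroup n) :=
  ⟨fun a => ⟨-a.x, fun i => -(ofH (-a.x) * a.v i)⟩⟩

theorem mul_def (a b : MagnusGroup n) :
    a * b = ⟨a.x + b.x, fun i => ofH a.x * b.v i + a.v i⟩ := rfl

theorem one_def : (1 : MagnusGroup n) = ⟨0, 0⟩ := rfl

theorem inv_def (a : MagnusGroup n) :
    a⁻¹ = ⟨-a.x, fun i => -(ofH (-a.x) * a.v i)⟩ := rfl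

instance : Group (MagnusGroup n) :=
  Group.ofLeftAxioms
    (fun a b c => by
      ext i
      · simp [mul_def, add_assoc]
      · simp only [mul_def, ofH_add]
        ring)
    (fun a => by
      ext i
      · simp [mul_def, one_def]
      · simp [mul_def, one_def, ofH_zero])
    (fun a => by
      ext i
      · simp [mul_def, inv_def, one_def]
      · simp [mul_def, inv_def, one_def])

/-- The generators `gᵢ = (xᵢ, tᵢ)` of the Magnus group, `xᵢ` the `i`-th standard basis
vector of `ℤⁿ`, `tᵢ` the `i`-th indeterminate. -/
def gen (i : Fin n) : MagnusGroup n :=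
  ⟨Pi.single i 1, Pi.single i 1⟩

end MagnusGroup

/-- The subgroup of the Magnus group generated by `g₁, …, gₙ` (the image of the free
metabelian group under the Magnus embedding) has trivial center for `n ≥ 2`. -/
theorem magnusEmbedding_image_center_trivial (n : ℕ) (hn : 2 ≤ n) :
    Subgroup.center ↥(Subgroup.closure (Set.range (MagnusGroup.gen (n := n)))) = ⊥ := by
  haveI : Nontrivial (Fin n) := ⟨⟨⟨0, by omega⟩, ⟨1, by omega⟩, by simp [Fin.ext_iff]⟩⟩
  have hofH : Function.Injective (ofH (n := n)) := by
    intro a b hab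
    have := MonoidAlgebra.of_injective hab
    exact this
  have hofH_ne : ∀ i : Fin n, ofH (Pi.single i 1 : Fin n → ℤ) ≠ 1 := by
    intro i h
    rw [← ofH_zero] at h
    have := hofH h
    have := congrFun this i
    simp at this
  rw [Subgroup.eq_bot_iff_forall]
  rintro ⟨g, hg⟩ hcen
  have hcomm : ∀ i : Fin n, MagnusGroup.gen i * g = g * MagnusGroup.gen i := by
    intro i
    have hgi : MagnusGroup.gen i ∈ Subgroup.closure (Set.range (MagnusGroup.gen (n := n))) :=
      Subgroup.subset_closure ⟨i, rfl⟩
    have h := Subgroup.mem_center_iff.mp hcen ⟨_, hgi⟩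
    exact congrArg Subtype.val h
  have hveq : ∀ i j : Fin n,
      ofH (Pi.single i 1) * g.v j + (Pi.single i 1 : Fin n → MagnusRing n) j
        = ofH g.x * (Pi.single i 1 : Fin n → MagnusRing n) j + g.v j := by
    intro i j
    have h := hcomm i
    rw [MagnusGroup.mul_def, MagnusGroup.mul_def] at h
    have := congrArg MagnusGroup.v h
    exact congrFun this j
  have hv : ∀ j : Fin n, g.v j = 0 := by
    intro j
    obtain ⟨i, hi⟩ := exists_ne j
    have h := hveq i j
    rw [Pi.single_eq_of_ne (Ne.symm hi)] at h
    have h2 : (ofH (Pi.single i 1 : Fin n → ℤ) - 1) * g.v j = 0 := by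
      have h' : ofH (Pi.single i 1) * g.v j = g.v j := by simpa using h
      rw [sub_mul, one_mul, h', sub_self]
    rcases mul_eq_zero.mp h2 with h3 | h3
    · exact absurd (sub_eq_zero.mp h3) (hofH_ne i)
    · exact h3
  have hx : g.x = 0 := by
    have h := hveq ⟨0, by omega⟩ ⟨0, by omega⟩
    rw [hv, Pi.single_eq_same] at h
    simp only [mul_zero, zero_add, mul_one] at h
    have h1 : ofH g.x = 1 := by simpa using h.symm
    rw [← ofH_zero] at h1
    exact hofH h1
  have : g = 1 := by
    rw [MagnusGroup.one_def]
    exact MagnusGroup.ext hx (funext hv)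
  exact Subtype.ext this

end
end
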